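/- For every integer d ≥ 4, A_d ≤ A_{d-1} + A_{d-2}. -/

import Mathlib

/-- The Macaulay bound `a^⟨t⟩`: writing the (unique, greedy) binomial expansion
`a = C(k(t),t) + C(k(t-1),t-1) + ⋯ + C(k(j),j)` with `k(t) > ⋯ > k(j) ≥ j ≥ 1`,
`macaulay t a = C(k(t)+1,t+1) + C(k(t-1)+1,t) + ⋯ + C(k(j)+1,j+1)`.
(The value at `t = 0` is irrelevant for the definitions below.) -/
def macaulay : ℕ → ℕ → ℕ
  | 0, a => a
  | t+1, a =>
    if a = 0 then 0
    else
      Nat.choose (Nat.findGreatest (fun m => Nat.choose m (t+1) ≤ a) (a + t + 1) + 1) (t+2)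
        + macaulay t (a - Nat.choose
            (Nat.findGreatest (fun m => Nat.choose m (t+1) ≤ a) (a + t + 1)) (t+1))

/-- A finite O-sequence `(a_0, a_1, …, a_s)`, encoded as a nonempty list of
positive integers with `a_0 = 1` and `a_{t+1} ≤ a_t^⟨t⟩` for all `1 ≤ t ≤ s-1`. -/
def IsOSeq (l : List ℕ) : Prop :=
  l ≠ [] ∧ (∀ x ∈ l, 0 < x) ∧ l.getD 0 0 = 1 ∧
    ∀ t : ℕ, 1 ≤ t → t + 1 < l.length → l.getD (t+1) 0 ≤ macaulay t (l.getD t 0)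

/-- `numOSeq d` = the number `O_d` of finite O-sequences of multiplicity `d`. -/
noncomputable def numOSeq (d : ℕ) : ℕ := {l : List ℕ | IsOSeq l ∧ l.sum = d}.ncard

/-- `numASeq d` = the number `A_d` of finite O-sequences of multiplicity `d`
whose last entry is strictly greater than `1`. -/
noncomputable def numASeq (d : ℕ) : ℕ :=
  {l : List ℕ | IsOSeq l ∧ l.sum = d ∧ 1 < l.getLastD 0}.ncard

/-- `numOCond p n k d` = the number `O(p,n,k,d)` of finite O-sequences
`(a_0,…,a_s)` of multiplicity `d` with `s ≤ n`, `a_i = C(p-1+i, i)` for all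
`0 ≤ i ≤ k` (in particular `s ≥ k`), and `a_i < C(p-1+i, i)` for `k < i ≤ s`. -/
noncomputable def numOCond (p n k d : ℕ) : ℕ :=
  {l : List ℕ | IsOSeq l ∧ l.sum = d ∧ l.length - 1 ≤ n ∧ k ≤ l.length - 1 ∧
    (∀ i ≤ k, l.getD i 0 = Nat.choose (p - 1 + i) i) ∧
    (∀ i : ℕ, k < i → i < l.length → l.getD i 0 < Nat.choose (p - 1 + i) i)}.ncard

lemma macaulay_zero (t : ℕ) : macaulay t 0 = 0 := by
  cases t <;> simp [macaulay]

lemma macaulay_one {t : ℕ} (ht : 1 ≤ t) : macaulay t 1 = 1 := by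
  obtain ⟨s, rfl⟩ := Nat.exists_eq_add_of_le ht
  rw [add_comm]
  have hF : Nat.findGreatest (fun m => Nat.choose m (s+1) ≤ 1) (1 + s + 1) = s + 1 := by
    rw [Nat.findGreatest_eq_iff]
    refine ⟨by omega, fun _ => by simp, fun n hn hn2 => ?_⟩
    have hn' : n = s + 2 := by omega
    subst hn'
    simp [Nat.choose_succ_self_right]
  simp [macaulay, hF, macaulay_zero]

lemma getD_pos {l : List ℕ} (h : ∀ x ∈ l, 0 < x) {i : ℕ} (hi : i < l.length) :
    0 < l.getD i 0 := by
  rw [List.getD_eq_getElem l 0 hi]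
  exact h _ (List.getElem_mem hi)

lemma isOSeq_concat_of_le {m : List ℕ} {a b : ℕ} (h : IsOSeq (m ++ [a]))
    (hm : m ≠ []) (hb : 0 < b) (hba : b ≤ a) : IsOSeq (m ++ [b]) := by
  obtain ⟨-, hpos, hhead, hmac⟩ := h
  have hml : 1 ≤ m.length := List.length_pos_iff.mpr hm
  refine ⟨by simp, ?_, ?_, ?_⟩
  · intro x hx
    rcases List.mem_append.mp hx with hx | hx
    · exact hpos x (List.mem_append.mpr (Or.inl hx))
    · simp at hx; omega
  · rwa [List.getD_append _ _ _ _ (by omega)] at hhead ⊢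
  · intro t ht htl
    simp only [List.length_append, List.length_singleton] at htl
    have hmt := hmac t ht (by simp; omega)
    rcases lt_or_ge (t+1) m.length with h1 | h1
    · rw [List.getD_append _ _ _ _ h1, List.getD_append _ _ _ _ (by omega)]
      rwa [List.getD_append _ _ _ _ h1, List.getD_append _ _ _ _ (by omega)] at hmt
    · have h2 : t + 1 = m.length := by omega
      rw [List.getD_append_right _ _ _ _ (by omega), List.getD_append _ _ _ _ (by omega)]
      rw [List.getD_append_right _ _ _ _ (by omega), List.getD_append _ _ _ _ (by omega)] at hmt
      simp only [h2, Nat.sub_self, List.getD_cons_zero] at hmt ⊢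
      omega

lemma isOSeq_dropLast {m : List ℕ} {a : ℕ} (h : IsOSeq (m ++ [a])) (hm : m ≠ []) :
    IsOSeq m := by
  obtain ⟨-, hpos, hhead, hmac⟩ := h
  have hml : 1 ≤ m.length := List.length_pos_iff.mpr hm
  refine ⟨hm, fun x hx => hpos x (by simp [hx]), ?_, ?_⟩
  · rwa [List.getD_append _ _ _ _ (by omega)] at hhead
  · intro t ht htl
    have hmt := hmac t ht (by simp; omega)
    rwa [List.getD_append _ _ _ _ htl, List.getD_append _ _ _ _ (by omega)] at hmt

lemma last_gt_one_of_concat {m : List ℕ} {a : ℕ} (h : IsOSeq (m ++ [a]))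
    (ha : 2 ≤ a) (hm : 2 ≤ m.length) : 1 < m.getD (m.length - 1) 0 := by
  obtain ⟨-, hpos, hhead, hmac⟩ := h
  have hmt := hmac (m.length - 1) (by omega) (by simp; omega)
  have he : m.length - 1 + 1 = m.length := by omega
  rw [he, List.getD_append_right _ _ _ _ le_rfl, Nat.sub_self,
    List.getD_append _ _ _ _ (by omega)] at hmt
  simp only [List.getD_cons_zero] at hmt
  have hp : 0 < m.getD (m.length - 1) 0 :=
    getD_pos (fun x hx => hpos x (by simp [hx])) (by omega)
  by_contra hc
  have h1 : m.getD (m.length - 1) 0 = 1 := by omega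
  rw [h1, macaulay_one (by omega)] at hmt
  omega

lemma finite_bdd (n m : ℕ) : {l : List ℕ | l.length ≤ n ∧ ∀ x ∈ l, x ≤ m}.Finite := by
  apply ((List.finite_length_le (Fin (m+1)) n).image (List.map Fin.val)).subset
  rintro l ⟨hl, hx⟩
  refine ⟨l.map (fun x => ⟨min x m, by omega⟩), by simpa, ?_⟩
  rw [List.map_map]
  conv_rhs => rw [← List.map_id l]
  exact List.map_congr_left (fun x hxl => by have := hx x hxl; simp; omega)

lemma length_le_sum {l : List ℕ} (h : ∀ x ∈ l, 0 < x) : l.length ≤ l.sum := by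
  induction l with
  | nil => simp
  | cons a t ih =>
    simp only [List.length_cons, List.sum_cons]
    have := h a (by simp)
    have := ih (fun x hx => h x (by simp [hx]))
    omega

lemma ASet_finite (d : ℕ) :
    {l : List ℕ | IsOSeq l ∧ l.sum = d ∧ 1 < l.getLastD 0}.Finite := by
  apply (finite_bdd d d).subset
  rintro l ⟨⟨-, hpos, -, -⟩, hsum, -⟩
  exact ⟨hsum ▸ length_le_sum hpos,
    fun x hx => hsum ▸ List.single_le_sum (fun y _ => Nat.zero_le y) x hx⟩

lemma getLastD_eq_getD {l : List ℕ} (h : l ≠ []) :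
    l.getLastD 0 = l.getD (l.length - 1) 0 := by
  rw [List.getLastD_eq_getLast?, List.getLast?_eq_getLast h, Option.getD_some,
    List.getLast_eq_getElem, List.getD_eq_getElem]

lemma mem_A_decomp {d : ℕ} (hd : 4 ≤ d) {l : List ℕ}
    (h : l ∈ {l : List ℕ | IsOSeq l ∧ l.sum = d ∧ 1 < l.getLastD 0}) :
    ∃ m a, l = m ++ [a] ∧ m ≠ [] ∧ 2 ≤ a ∧ m.sum + a = d ∧ (a = 2 → 2 ≤ m.length) := by
  obtain ⟨hO, hsum, hlast⟩ := h
  obtain ⟨hne, hpos, hhead, hmac⟩ := hO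
  have hdec := List.dropLast_append_getLast hne
  have hlv : l.getLastD 0 = l.getLast hne := by
    rw [List.getLastD_eq_getLast?, List.getLast?_eq_getLast hne, Option.getD_some]
  rw [hlv] at hlast
  refine ⟨l.dropLast, l.getLast hne, (List.dropLast_append_getLast hne).symm, ?_, ?_, ?_, ?_⟩
  · intro hemp
    rw [hemp] at hdec
    rw [← hdec] at hhead
    simp at hhead
    omega
  · omega
  · rw [← hdec] at hsum; simp at hsum; omega
  · intro h2
    by_contra hlen
    have hml : l.dropLast ≠ [] := by
      intro hemp
      rw [hemp] at hdec
      rw [← hdec] at hhead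
      simp at hhead
      omega
    have hml1 : l.dropLast.length = 1 := by
      have := List.length_pos_iff.mpr hml; omega
    obtain ⟨x, hx⟩ := List.length_eq_one_iff.mp hml1
    rw [← hdec, hx] at hsum
    rw [← hdec, hx] at hhead
    simp at hhead hsum
    omega


/-- For every integer `d ≥ 4`, `A_d ≤ A_{d-1} + A_{d-2}`. -/
theorem Ad_le_Ad_sub_one_add_Ad_sub_two (d : ℕ) (hd : 4 ≤ d) :
    numASeq d ≤ numASeq (d - 1) + numASeq (d - 2) := by
  classical
  rw [numASeq, numASeq, numASeq]
  set A := {l : List ℕ | IsOSeq l ∧ l.sum = d ∧ 1 < l.getLastD 0} with hA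
  set S1 := {l : List ℕ | IsOSeq l ∧ l.sum = d - 1 ∧ 1 < l.getLastD 0} with hS1
  set S2 := {l : List ℕ | IsOSeq l ∧ l.sum = d - 2 ∧ 1 < l.getLastD 0} with hS2
  set f : List ℕ → List ℕ := fun l =>
    if l.getLastD 0 = 2 then l.dropLast else l.dropLast ++ [l.getLastD 0 - 1] with hf
  have hsub : f '' A ⊆ S1 ∪ S2 := by
    rintro - ⟨l, hl, rfl⟩
    obtain ⟨m, a, rfl, hm, ha, hsum, h2len⟩ := mem_A_decomp hd hl
    have hO : IsOSeq (m ++ [a]) := hl.1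
    by_cases hc : a = 2
    · right
      subst hc
      have hfl : f (m ++ [2]) = m := by simp [hf]
      rw [hfl, hS2]
      refine ⟨isOSeq_dropLast hO hm, by omega, ?_⟩
      rw [getLastD_eq_getD hm]
      exact last_gt_one_of_concat hO le_rfl (h2len rfl)
    · left
      have hfl : f (m ++ [a]) = m ++ [a - 1] := by
        simp only [hf]
        rw [if_neg (by simp; omega)]
        simp
      rw [hfl, hS1]
      refine ⟨isOSeq_concat_of_le hO hm (by omega) (by omega), ?_, by simp; omega⟩
      simp only [List.sum_append, List.sum_cons, List.sum_nil]
      omega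
  have hinj : Set.InjOn f A := by
    intro l1 h1 l2 h2 hfe
    obtain ⟨m1, a1, rfl, hm1, ha1, hsum1, h2len1⟩ := mem_A_decomp hd h1
    obtain ⟨m2, a2, rfl, hm2, ha2, hsum2, h2len2⟩ := mem_A_decomp hd h2
    have hgl1 : (m1 ++ [a1]).getLastD 0 = a1 := by simp
    have hgl2 : (m2 ++ [a2]).getLastD 0 = a2 := by simp
    by_cases hc1 : a1 = 2 <;> by_cases hc2 : a2 = 2
    · subst hc1; subst hc2
      have : m1 = m2 := by simpa [hf] using hfe
      rw [this]
    · exfalso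
      have hfe1 : f (m1 ++ [a1]) = m1 := by simp [hf, hc1]
      have hfe2 : f (m2 ++ [a2]) = m2 ++ [a2 - 1] := by
        simp only [hf]; rw [if_neg (by simp; omega)]; simp
      have := congrArg List.sum (hfe1 ▸ hfe2 ▸ hfe)
      simp only [List.sum_append, List.sum_cons, List.sum_nil] at this
      omega
    · exfalso
      have hfe1 : f (m1 ++ [a1]) = m1 ++ [a1 - 1] := by
        simp only [hf]; rw [if_neg (by simp; omega)]; simp
      have hfe2 : f (m2 ++ [a2]) = m2 := by simp [hf, hc2]
      have := congrArg List.sum (hfe1 ▸ hfe2 ▸ hfe)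
      simp only [List.sum_append, List.sum_cons, List.sum_nil] at this
      omega
    · have hfe1 : f (m1 ++ [a1]) = m1 ++ [a1 - 1] := by
        simp only [hf]; rw [if_neg (by simp; omega)]; simp
      have hfe2 : f (m2 ++ [a2]) = m2 ++ [a2 - 1] := by
        simp only [hf]; rw [if_neg (by simp; omega)]; simp
      rw [hfe1, hfe2] at hfe
      have hmm : m1 = m2 := by
        have := congrArg List.dropLast hfe; simpa using this
      have haa : a1 - 1 = a2 - 1 := by
        have := congrArg (fun l => List.getLastD l 0) hfe; simpa using this
      rw [hmm, show a1 = a2 by omega]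
  calc A.ncard = (f '' A).ncard := (Set.ncard_image_of_injOn hinj).symm
    _ ≤ (S1 ∪ S2).ncard :=
        Set.ncard_le_ncard hsub ((ASet_finite (d-1)).union (ASet_finite (d-2)))
    _ ≤ S1.ncard + S2.ncard := Set.ncard_union_le _ _
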